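/- Suppose B is a tensored, cotensored, and finitely well-complete V-category. Then (Epi_V B, StrMono_V B) = (Epi B, StrMono B) is a V-factorization system on B. -/

import Mathlib

open CategoryTheory CategoryTheory.Limits CategoryTheory.MonoidalCategory

universe w v₁ v₂ v₃ v₄ u₁ u₂ u₃ u₄

namespace EnrichedFS

variable (V : Type u₁) [Category.{v₁} V] [MonoidalCategory V] [SymmetricCategory V]
  [MonoidalClosed V]
variable (B : Type u₂) [Category.{v₂} B] [EnrichedOrdinaryCategory V B]

/-- `e` is `V`-orthogonal to `m`: the square of hom-objects
with top `B(A₂,m)`, left `B(e,X₁)`, right `B(e,X₂)`, bottom `B(A₁,m)`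
is a pullback in `V`. -/
def VOrth {A₁ A₂ X₁ X₂ : B} (e : A₁ ⟶ A₂) (m : X₁ ⟶ X₂) : Prop :=
  IsPullback (eHomWhiskerLeft V A₂ m) (eHomWhiskerRight V e X₁)
    (eHomWhiskerRight V e X₂) (eHomWhiskerLeft V A₁ m)

/-- `H^{↓V}`: the class of morphisms to which every member of `H` is `V`-orthogonal. -/
def vRlp (H : MorphismProperty B) : MorphismProperty B :=
  fun _ _ m => ∀ ⦃A₁ A₂ : B⦄ (e : A₁ ⟶ A₂), H e → VOrth V B e m

/-- `M^{↑V}`: the class of morphisms which are `V`-orthogonal to every member of `M`. -/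
def vLlp (M : MorphismProperty B) : MorphismProperty B :=
  fun _ _ e => ∀ ⦃X₁ X₂ : B⦄ (m : X₁ ⟶ X₂), M m → VOrth V B e m

/-- ordinary orthogonality: unique diagonal fillers for every commutative square. -/
def OrdOrth {A₁ A₂ X₁ X₂ : B} (e : A₁ ⟶ A₂) (m : X₁ ⟶ X₂) : Prop :=
  ∀ (u : A₁ ⟶ X₁) (v : A₂ ⟶ X₂), u ≫ m = e ≫ v →
    ∃! d : A₂ ⟶ X₁, e ≫ d = u ∧ d ≫ m = v

/-- `H^{↓}` (ordinary). -/
def ordRlp (H : MorphismProperty B) : MorphismProperty B :=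
  fun _ _ m => ∀ ⦃A₁ A₂ : B⦄ (e : A₁ ⟶ A₂), H e → OrdOrth B e m

/-- `M^{↑}` (ordinary). -/
def ordLlp (M : MorphismProperty B) : MorphismProperty B :=
  fun _ _ e => ∀ ⦃X₁ X₂ : B⦄ (m : X₁ ⟶ X₂), M m → OrdOrth B e m

/-- `(E,M)` is a `V`-prefactorization system: `E^{↓V} = M` and `M^{↑V} = E`. -/
def IsVPrefactorization (E M : MorphismProperty B) : Prop :=
  vRlp V B E = M ∧ vLlp V B M = E

/-- `(E,M)` is an ordinary prefactorization system. -/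
def IsOrdPrefactorization (E M : MorphismProperty B) : Prop :=
  ordRlp B E = M ∧ ordLlp B M = E

/-- every morphism factors as a morphism in `E` followed by a morphism in `M`. -/
def FactorizationsExist (E M : MorphismProperty B) : Prop :=
  ∀ ⦃X Y : B⦄ (f : X ⟶ Y), ∃ (Z : B) (e : X ⟶ Z) (m : Z ⟶ Y), E e ∧ M m ∧ e ≫ m = f

/-- `(E,M)` is a `V`-factorization system. -/
def IsVFactorizationSystem (E M : MorphismProperty B) : Prop :=
  IsVPrefactorization V B E M ∧ FactorizationsExist B E M

/-- `(E,M)` is an ordinary factorization system. -/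
def IsOrdFactorizationSystem (E M : MorphismProperty B) : Prop :=
  IsOrdPrefactorization B E M ∧ FactorizationsExist B E M

/-- intersection of two classes of morphisms. -/
def interProp (M N : MorphismProperty B) : MorphismProperty B := fun _ _ f => M f ∧ N f

/-- `V`-monomorphisms. -/
def vMono : MorphismProperty B := fun _ _ m => ∀ A : B, Mono (eHomWhiskerLeft V A m)

/-- `V`-epimorphisms. -/
def vEpi : MorphismProperty B := fun _ _ e => ∀ A : B, Mono (eHomWhiskerRight V e A)

/-- `V`-strong monomorphisms. -/
def vStrongMono : MorphismProperty B := fun _ _ m =>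
  vMono V B m ∧ ∀ ⦃A₁ A₂ : B⦄ (e : A₁ ⟶ A₂), vEpi V B e → VOrth V B e m

/-- `V`-strong epimorphisms. -/
def vStrongEpi : MorphismProperty B := fun _ _ e =>
  vEpi V B e ∧ ∀ ⦃X₁ X₂ : B⦄ (m : X₁ ⟶ X₂), vMono V B m → VOrth V B e m

/-- ordinary monomorphisms, as a class. -/
def ordMono : MorphismProperty B := fun _ _ m => Mono m

/-- ordinary epimorphisms, as a class. -/
def ordEpi : MorphismProperty B := fun _ _ e => Epi e

/-- ordinary strong monomorphisms. -/
def ordStrongMono : MorphismProperty B := fun _ _ m =>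
  Mono m ∧ ∀ ⦃A₁ A₂ : B⦄ (e : A₁ ⟶ A₂), Epi e → OrdOrth B e m

/-- ordinary strong epimorphisms. -/
def ordStrongEpi : MorphismProperty B := fun _ _ e =>
  Epi e ∧ ∀ ⦃X₁ X₂ : B⦄ (m : X₁ ⟶ X₂), Mono m → OrdOrth B e m

/-- closure under composition with isomorphisms on either side. -/
def ClosedUnderIsoComp (E : MorphismProperty B) : Prop :=
  (∀ ⦃X Y Z : B⦄ (e : X ⟶ Y) (i : Y ⟶ Z), E e → IsIso i → E (e ≫ i)) ∧
  (∀ ⦃X Y Z : B⦄ (i : X ⟶ Y) (e : Y ⟶ Z), IsIso i → E e → E (i ≫ e))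

/-- a commutative square which is a `V`-pullback: it is sent to a pullback square
in `V` by every hom functor `B(A,-)`. -/
def IsVPullbackSq {P X Y Z : B} (p₁ : P ⟶ X) (p₂ : P ⟶ Y) (f : X ⟶ Z) (g : Y ⟶ Z) : Prop :=
  p₁ ≫ f = p₂ ≫ g ∧
    ∀ A : B, IsPullback (eHomWhiskerLeft V A p₁) (eHomWhiskerLeft V A p₂)
      (eHomWhiskerLeft V A f) (eHomWhiskerLeft V A g)

/-- a commutative square which is a `V`-pushout: it is sent to a pullback square
in `V` by every hom functor `B(-,A)`. -/
def IsVPushoutSq {X Y₁ Y₂ Q : B} (f₁ : X ⟶ Y₁) (f₂ : X ⟶ Y₂) (i₁ : Y₁ ⟶ Q) (i₂ : Y₂ ⟶ Q) :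
    Prop :=
  f₁ ≫ i₁ = f₂ ≫ i₂ ∧
    ∀ A : B, IsPullback (eHomWhiskerRight V i₁ A) (eHomWhiskerRight V i₂ A)
      (eHomWhiskerRight V f₁ A) (eHomWhiskerRight V f₂ A)

/-- `B` has `V`-kernel pairs. -/
def HasVKernelPairs : Prop :=
  ∀ ⦃X Y : B⦄ (f : X ⟶ Y), ∃ (P : B) (p₁ p₂ : P ⟶ X), IsVPullbackSq V B p₁ p₂ f f

/-- `B` has `V`-cokernel pairs. -/
def HasVCokernelPairs : Prop :=
  ∀ ⦃X Y : B⦄ (f : X ⟶ Y), ∃ (Q : B) (i₁ i₂ : Y ⟶ Q), IsVPushoutSq V B f f i₁ i₂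

/-- `m : P ⟶ C` is a `V`-fibre-product (`V`-wide-pullback) of the family `f i : X i ⟶ C`,
with projections `π i`. -/
def IsVFibreProduct {ι : Type w} {C : B} {X : ι → B} (f : ∀ i, X i ⟶ C)
    {P : B} (m : P ⟶ C) (π : ∀ i, P ⟶ X i) : Prop :=
  (∀ i, π i ≫ f i = m) ∧
    ∀ (A : B) (Z : V) (z : Z ⟶ (A ⟶[V] C)) (zi : ∀ i, Z ⟶ (A ⟶[V] X i)),
      (∀ i, zi i ≫ eHomWhiskerLeft V A (f i) = z) →
        ∃! t : Z ⟶ (A ⟶[V] P), t ≫ eHomWhiskerLeft V A m = z ∧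
          ∀ i, t ≫ eHomWhiskerLeft V A (π i) = zi i

/-- `m : P ⟶ C` is an ordinary fibre product (wide pullback) of the family `f i : X i ⟶ C`. -/
def OrdIsFibreProduct {ι : Type w} {C : B} {X : ι → B} (f : ∀ i, X i ⟶ C)
    {P : B} (m : P ⟶ C) (π : ∀ i, P ⟶ X i) : Prop :=
  (∀ i, π i ≫ f i = m) ∧
    ∀ ⦃W' : B⦄ (z : W' ⟶ C) (zi : ∀ i, W' ⟶ X i), (∀ i, zi i ≫ f i = z) →
      ∃! t : W' ⟶ P, t ≫ m = z ∧ ∀ i, t ≫ π i = zi i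

/-- a cone is a `V`-limit cone: it is sent to a limit cone in `V` by every `B(A,-)`. -/
def IsVLimitCone {J : Type u₃} [Category.{v₃} J] {D : J ⥤ B} (c : Cone D) : Prop :=
  ∀ (A : B) (Z : V) (z : ∀ j : J, Z ⟶ (A ⟶[V] D.obj j)),
    (∀ ⦃j j' : J⦄ (φ : j ⟶ j'), z j ≫ eHomWhiskerLeft V A (D.map φ) = z j') →
      ∃! t : Z ⟶ (A ⟶[V] c.pt), ∀ j, t ≫ eHomWhiskerLeft V A (c.π.app j) = z j

/-- a cocone is a `V`-colimit cocone: it is sent to a limit cone in `V` by every `B(-,A)`. -/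
def IsVColimitCocone {J : Type u₃} [Category.{v₃} J] {D : J ⥤ B} (c : Cocone D) : Prop :=
  ∀ (A : B) (Z : V) (z : ∀ j : J, Z ⟶ (D.obj j ⟶[V] A)),
    (∀ ⦃j j' : J⦄ (φ : j ⟶ j'), z j' ≫ eHomWhiskerRight V (D.map φ) A = z j) →
      ∃! t : Z ⟶ (c.pt ⟶[V] A), ∀ j, t ≫ eHomWhiskerRight V (c.ι.app j) A = z j

/-- `B` has small `V`-limits. -/
def HasSmallVLimits : Prop :=
  ∀ (J : Type v₂) [SmallCategory J] (D : J ⥤ B), ∃ c : Cone D, IsVLimitCone V B c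

/-- `B` has small `V`-colimits. -/
def HasSmallVColimits : Prop :=
  ∀ (J : Type v₂) [SmallCategory J] (D : J ⥤ B), ∃ c : Cocone D, IsVColimitCocone V B c

/-- `B` has finite `V`-limits. -/
def HasFiniteVLimits : Prop :=
  ∀ (J : Type) [SmallCategory J] [FinCategory J] (D : J ⥤ B),
    ∃ c : Cone D, IsVLimitCone V B c

/-- `B` is well-powered with respect to the class `M`: every object has,
up to isomorphism, only a set of `M`-subobjects. -/
def WellPoweredWrt (M : MorphismProperty B) : Prop :=
  ∀ X : B, ∃ (ι : Type v₂) (Y : ι → B) (f : ∀ i, Y i ⟶ X), (∀ i, M (f i)) ∧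
    ∀ ⦃Z : B⦄ (g : Z ⟶ X), M g → ∃ (i : ι) (h : Z ≅ Y i), h.hom ≫ f i = g

/-- `B` is co-well-powered with respect to the class `E`. -/
def CoWellPoweredWrt (E : MorphismProperty B) : Prop :=
  ∀ X : B, ∃ (ι : Type v₂) (Y : ι → B) (f : ∀ i, X ⟶ Y i), (∀ i, E (f i)) ∧
    ∀ ⦃Z : B⦄ (g : X ⟶ Z), E g → ∃ (i : ι) (h : Y i ≅ Z), f i ≫ h.hom = g

/-- comparison morphism `B(T, X) ⟶ [v, B(A, X)]` in `V` induced by a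
unit `η : v ⟶ B(A, T)`, where `T` is a candidate tensor `v ⊗ A`. -/
def tensorComparison {v : V} {A T : B} (η : v ⟶ (A ⟶[V] T)) (X : B) :
    (T ⟶[V] X) ⟶ (ihom v).obj (A ⟶[V] X) :=
  MonoidalClosed.curry (eComp V A T X) ≫ (MonoidalClosed.pre η).app (A ⟶[V] X)

/-- `η : v ⟶ B(A,T)` exhibits `T` as a tensor `v ⊗ A` in the enriched sense. -/
def IsTensorUnit (v : V) (A T : B) (η : v ⟶ (A ⟶[V] T)) : Prop :=
  ∀ X : B, IsIso (tensorComparison V B η X)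

/-- `B` is tensored over `V`. -/
def Tensored : Prop :=
  ∀ (v : V) (A : B), ∃ (T : B) (η : v ⟶ (A ⟶[V] T)), IsTensorUnit V B v A T η

/-- `E` is closed under tensors: whenever tensors exist, `v ⊗ e` lies in `E` for `e ∈ E`. -/
def ClosedUnderTensors (E : MorphismProperty B) : Prop :=
  ∀ (v : V) ⦃A₁ A₂ : B⦄ (e : A₁ ⟶ A₂) {T₁ T₂ : B}
    (η₁ : v ⟶ (A₁ ⟶[V] T₁)) (η₂ : v ⟶ (A₂ ⟶[V] T₂)),
    IsTensorUnit V B v A₁ T₁ η₁ → IsTensorUnit V B v A₂ T₂ η₂ → E e →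
      ∀ t : T₁ ⟶ T₂, η₁ ≫ eHomWhiskerLeft V A₁ t = η₂ ≫ eHomWhiskerRight V e T₂ → E t

/-- comparison morphism `B(A, C) ⟶ [v, B(A, X)]` in `V` induced by a
counit `ε : v ⟶ B(C, X)`, where `C` is a candidate cotensor `[v, X]`. -/
def cotensorComparison {v : V} {C X : B} (ε : v ⟶ (C ⟶[V] X)) (A : B) :
    (A ⟶[V] C) ⟶ (ihom v).obj (A ⟶[V] X) :=
  MonoidalClosed.curry ((β_ (C ⟶[V] X) (A ⟶[V] C)).hom ≫ eComp V A C X) ≫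
    (MonoidalClosed.pre ε).app (A ⟶[V] X)

/-- `ε : v ⟶ B(C,X)` exhibits `C` as a cotensor `[v, X]` in the enriched sense. -/
def IsCotensorCounit (v : V) (X C : B) (ε : v ⟶ (C ⟶[V] X)) : Prop :=
  ∀ A : B, IsIso (cotensorComparison V B ε A)

/-- `B` is cotensored over `V`. -/
def Cotensored : Prop :=
  ∀ (v : V) (X : B), ∃ (C : B) (ε : v ⟶ (C ⟶[V] X)), IsCotensorCounit V B v X C ε

/-- `M` is closed under cotensors: `[v, m]` lies in `M` for `m ∈ M`. -/
def ClosedUnderCotensors (M : MorphismProperty B) : Prop :=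
  ∀ (v : V) ⦃X₁ X₂ : B⦄ (m : X₁ ⟶ X₂) {C₁ C₂ : B}
    (ε₁ : v ⟶ (C₁ ⟶[V] X₁)) (ε₂ : v ⟶ (C₂ ⟶[V] X₂)),
    IsCotensorCounit V B v X₁ C₁ ε₁ → IsCotensorCounit V B v X₂ C₂ ε₂ → M m →
      ∀ t : C₁ ⟶ C₂, ε₁ ≫ eHomWhiskerLeft V C₁ m = ε₂ ≫ eHomWhiskerRight V t X₂ → M t

/-- a `V`-functor from a `V`-category `J` to an enriched ordinary category `D`. -/
structure VFunctor (J : Type u₃) [EnrichedCategory V J]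
    (D : Type u₄) [Category.{v₄} D] [EnrichedOrdinaryCategory V D] where
  obj : J → D
  emap : ∀ X Y : J, (X ⟶[V] Y) ⟶ (obj X ⟶[V] obj Y)
  emap_id : ∀ X : J, eId V X ≫ emap X X = eId V (obj X)
  emap_comp : ∀ X Y Z : J,
    eComp V X Y Z ≫ emap X Z = (emap X Y ⊗ₘ emap Y Z) ≫ eComp V (obj X) (obj Y) (obj Z)

/-- the underlying action of a `V`-functor on ordinary morphisms. -/
def VFunctor.map' {J : Type u₃} [Category.{v₃} J] [EnrichedOrdinaryCategory V J]
    {D : Type u₄} [Category.{v₄} D] [EnrichedOrdinaryCategory V D]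
    (F : VFunctor V J D) {X Y : J} (f : X ⟶ Y) : F.obj X ⟶ F.obj Y :=
  (eHomEquiv V).symm (eHomEquiv V f ≫ F.emap X Y)

/-- a `V`-adjunction `F ⊣ G`, given by a `V`-natural isomorphism
`D(F A, X) ≅ A(A, G X)` of hom-objects. -/
structure VAdjunction {A : Type u₃} [Category.{v₃} A] [EnrichedOrdinaryCategory V A]
    {D : Type u₄} [Category.{v₄} D] [EnrichedOrdinaryCategory V D]
    (F : VFunctor V A D) (G : VFunctor V D A) where
  iso : ∀ (X : A) (Y : D), (F.obj X ⟶[V] Y) ≅ (X ⟶[V] G.obj Y)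
  nat_right : ∀ (X : A) (Y Y' : D),
    eComp V (F.obj X) Y Y' ≫ (iso X Y').hom =
      ((iso X Y).hom ⊗ₘ G.emap Y Y') ≫ eComp V X (G.obj Y) (G.obj Y')
  nat_left : ∀ (X X' : A) (Y : D),
    (F.emap X X' ▷ (F.obj X' ⟶[V] Y)) ≫ eComp V (F.obj X) (F.obj X') Y ≫ (iso X Y).hom =
      ((X ⟶[V] X') ◁ (iso X' Y).hom) ≫ eComp V X X' (G.obj Y)

/-- a `V`-functor `J → V` (a weight), presented by its uncurried action. -/
structure VWeight (J : Type u₃) [EnrichedCategory V J] where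
  obj : J → V
  act : ∀ j j' : J, obj j ⊗ (j ⟶[V] j') ⟶ obj j'
  act_id : ∀ j : J, (obj j ◁ eId V j) ≫ act j j = (ρ_ (obj j)).hom
  act_comp : ∀ j j' j'' : J,
    (α_ (obj j) (j ⟶[V] j') (j' ⟶[V] j'')).inv ≫ (act j j' ▷ (j' ⟶[V] j'')) ≫ act j' j'' =
      (obj j ◁ eComp V j j' j'') ≫ act j j''

/-- a `V`-natural transformation between `V`-functors. -/
structure VNatTrans {J : Type u₃} [EnrichedCategory V J]
    {D : Type u₄} [Category.{v₄} D] [EnrichedOrdinaryCategory V D]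
    (F G : VFunctor V J D) where
  app : ∀ j : J, F.obj j ⟶ G.obj j
  naturality : ∀ j j' : J,
    F.emap j j' ≫ eHomWhiskerLeft V (F.obj j) (app j') =
      G.emap j j' ≫ eHomWhiskerRight V (app j) (G.obj j')

/-- `cone` exhibits `L` as the `V`-enriched weighted (indexed) limit `[W, F]`. -/
structure IsWeightedLimit {J : Type u₃} [EnrichedCategory V J]
    {D : Type u₄} [Category.{v₄} D] [EnrichedOrdinaryCategory V D]
    (W : VWeight V J) (F : VFunctor V J D) (L : D)
    (cone : ∀ j : J, W.obj j ⟶ (L ⟶[V] F.obj j)) : Prop where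
  natural : ∀ j j' : J,
    W.act j j' ≫ cone j' =
      (cone j ▷ (j ⟶[V] j')) ≫ ((L ⟶[V] F.obj j) ◁ F.emap j j') ≫
        eComp V L (F.obj j) (F.obj j')
  universal : ∀ (A : D) (Z : V) (μ : ∀ j : J, Z ⊗ W.obj j ⟶ (A ⟶[V] F.obj j)),
    (∀ j j' : J,
      (Z ◁ W.act j j') ≫ μ j' =
        (α_ Z (W.obj j) (j ⟶[V] j')).inv ≫ (μ j ▷ (j ⟶[V] j')) ≫
          ((A ⟶[V] F.obj j) ◁ F.emap j j') ≫ eComp V A (F.obj j) (F.obj j')) →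
      ∃! t : Z ⟶ (A ⟶[V] L), ∀ j : J,
        (t ▷ W.obj j) ≫ ((A ⟶[V] L) ◁ cone j) ≫ eComp V A L (F.obj j) = μ j

/-- `B` is `V`-finitely-well-complete: it has finite `V`-limits and `V`-intersections
of arbitrary class-indexed families of `V`-strong monomorphisms. -/
def VFinitelyWellComplete : Prop :=
  HasFiniteVLimits V B ∧
    ∀ {ι : Type (max u₂ v₂)} {C : B} (X : ι → B) (f : ∀ i, X i ⟶ C),
      (∀ i, vStrongMono V B (f i)) →
        ∃ (P : B) (m : P ⟶ C) (π : ∀ i, P ⟶ X i), IsVFibreProduct V B f m π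

/-- `B` is finitely well-complete (ordinary sense): it has finite limits and
intersections of arbitrary class-indexed families of strong monomorphisms. -/
def OrdFinitelyWellComplete : Prop :=
  HasFiniteLimits B ∧
    ∀ {ι : Type (max u₂ v₂)} {C : B} (X : ι → B) (f : ∀ i, X i ⟶ C),
      (∀ i, ordStrongMono B (f i)) →
        ∃ (P : B) (m : P ⟶ C) (π : ∀ i, P ⟶ X i), OrdIsFibreProduct B f m π

end EnrichedFS

/-!
Tensors and cotensors let one test `V`-enriched properties on generalised elements
`v ⟶ B(A, X)`, which correspond to ordinary morphisms `v ⊗ A ⟶ X` and `A ⟶ [v, X]`.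
Cotensors therefore identify `V`-epimorphisms with epimorphisms, tensors identify
`V`-monomorphisms with monomorphisms, and a square witnessing `V`-orthogonality of `e`
against `m` at stage `v` is an ordinary square of `v ⊗ e` against `m`, where `v ⊗ e` is
again an epimorphism. The ordinary (epi, strong mono) factorization of `f` is obtained by
intersecting all strong-mono factorizations of `f`: the first factor is an epimorphism
because any equalizer through which it factors yields a smaller such factorization.
-/

namespace EnrichedFS

section Ordinary

variable {C : Type u₂} [Category.{v₂} C]

lemma isPullback_of_existsUnique {P X Y Z : C}
    {fst : P ⟶ X} {snd : P ⟶ Y} {f : X ⟶ Z} {g : Y ⟶ Z} (w : fst ≫ f = snd ≫ g)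
    (h : ∀ (W : C) (a : W ⟶ X) (b : W ⟶ Y), a ≫ f = b ≫ g →
      ∃! t : W ⟶ P, t ≫ fst = a ∧ t ≫ snd = b) : IsPullback fst snd f g :=
  IsPullback.of_isLimit' ⟨w⟩ <| PullbackCone.IsLimit.mk _
    (fun s => (h s.pt s.fst s.snd s.condition).choose)
    (fun s => (h s.pt s.fst s.snd s.condition).choose_spec.1.1)
    (fun s => (h s.pt s.fst s.snd s.condition).choose_spec.1.2)
    (fun s t h₁ h₂ => (h s.pt s.fst s.snd s.condition).choose_spec.2 t ⟨h₁, h₂⟩)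

lemma ordOrth_iff_hasLiftingProperty {A₁ A₂ X₁ X₂ : C} (e : A₁ ⟶ A₂) (m : X₁ ⟶ X₂) [Mono m] :
    OrdOrth C e m ↔ HasLiftingProperty e m := by
  refine ⟨fun h => ⟨fun {u v} sq => ?_⟩, fun _ u v w => ?_⟩
  · obtain ⟨d, ⟨hd₁, hd₂⟩, -⟩ := h u v sq.w
    exact ⟨⟨{ l := d, fac_left := hd₁, fac_right := hd₂ }⟩⟩
  · have sq : CommSq u e m v := ⟨w⟩
    exact ⟨sq.lift, ⟨sq.fac_left, sq.fac_right⟩, fun d hd => by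
      rw [← cancel_mono m, hd.2, sq.fac_right]⟩

lemma ordStrongMono_iff_strongMono {X₁ X₂ : C} (m : X₁ ⟶ X₂) :
    ordStrongMono C m ↔ StrongMono m := by
  refine ⟨fun ⟨_, h⟩ => ⟨inferInstance, fun _ _ e _ => ?_⟩, fun _ => ⟨inferInstance, ?_⟩⟩
  · exact (ordOrth_iff_hasLiftingProperty e m).1 (h e inferInstance)
  · exact fun _ _ e _ => (ordOrth_iff_hasLiftingProperty e m).2 inferInstance

lemma OrdIsFibreProduct.hom_ext {ι : Type w} {Y : C} {X : ι → C} {f : ∀ i, X i ⟶ Y}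
    {P : C} {m : P ⟶ Y} {π : ∀ i, P ⟶ X i} (hP : OrdIsFibreProduct C f m π)
    {W : C} {a b : W ⟶ P} (hm : a ≫ m = b ≫ m) (hπ : ∀ i, a ≫ π i = b ≫ π i) : a = b := by
  obtain ⟨t, -, ht⟩ := hP.2 (a ≫ m) (fun i => a ≫ π i) fun i => by
    rw [Category.assoc, hP.1 i]
  exact (ht a ⟨rfl, fun _ => rfl⟩).trans (ht b ⟨hm.symm, fun i => (hπ i).symm⟩).symm

lemma OrdIsFibreProduct.strongMono {ι : Type w} {Y : C} {X : ι → C} {f : ∀ i, X i ⟶ Y}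
    {P : C} {m : P ⟶ Y} {π : ∀ i, P ⟶ X i} (hP : OrdIsFibreProduct C f m π)
    (hf : ∀ i, StrongMono (f i)) : StrongMono m := by
  have : Mono m := ⟨fun a b hab => hP.hom_ext hab fun i => by
    rw [← cancel_mono (f i), Category.assoc, Category.assoc, hP.1 i, hab]⟩
  refine StrongMono.mk' fun A₁ A₂ e _ u v sq => ?_
  have sqi : ∀ i, CommSq (u ≫ π i) e (f i) v := fun i =>
    ⟨by rw [Category.assoc, hP.1 i, sq.w]⟩
  obtain ⟨d, ⟨hdm, hdπ⟩, -⟩ := hP.2 v (fun i => (sqi i).lift) fun i => (sqi i).fac_right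
  refine ⟨⟨{ l := d, fac_left := hP.hom_ext ?_ fun i => ?_, fac_right := hdm }⟩⟩
  · rw [Category.assoc, hdm, sq.w]
  · rw [Category.assoc, hdπ, (sqi i).fac_left]

lemma factorizationsExist_ordEpi_ordStrongMono (hC : OrdFinitelyWellComplete C) :
    FactorizationsExist C (ordEpi C) (ordStrongMono C) := by
  intro X Y f
  have := hC.1
  obtain ⟨P, m, π, hP⟩ := hC.2 (ι := {F : MonoFactorisation f // StrongMono F.m})
    (fun F => F.1.I) (fun F => F.1.m) fun F => (ordStrongMono_iff_strongMono _).2 F.2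
  obtain ⟨e, ⟨hem, -⟩, -⟩ := hP.2 f (fun F => F.1.e) fun F => F.1.fac
  have : StrongMono m := hP.strongMono fun F => F.2
  refine ⟨P, e, m, ⟨fun u v huv => ?_⟩, (ordStrongMono_iff_strongMono m).2 this, hem⟩
  let F : MonoFactorisation f :=
    { I := equalizer u v, m := equalizer.ι u v ≫ m, e := equalizer.lift e huv }
  have hsection : π ⟨F, inferInstance⟩ ≫ equalizer.ι u v = 𝟙 P := by
    rw [← cancel_mono m, Category.assoc, Category.id_comp]
    exact hP.1 ⟨F, inferInstance⟩
  rw [← Category.id_comp u, ← Category.id_comp v, ← hsection, Category.assoc,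
    equalizer.condition, Category.assoc]

lemma strongMono_of_ordRlp_ordEpi (hC : OrdFinitelyWellComplete C) {X₁ X₂ : C} {m : X₁ ⟶ X₂}
    (hm : ordRlp C (ordEpi C) m) : StrongMono m := by
  obtain ⟨Z, e, m', he, hm', rfl⟩ := factorizationsExist_ordEpi_ordStrongMono hC m
  have : Epi e := he
  have := (ordStrongMono_iff_strongMono m').1 hm'
  obtain ⟨r, ⟨hr, -⟩, -⟩ := hm e he (𝟙 X₁) m' (Category.id_comp _)
  have : IsSplitMono e := ⟨⟨⟨r, hr⟩⟩⟩
  have := isIso_of_epi_of_isSplitMono e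
  infer_instance

lemma epi_of_ordLlp_ordStrongMono (hC : OrdFinitelyWellComplete C) {A₁ A₂ : C} {e : A₁ ⟶ A₂}
    (he : ordLlp C (ordStrongMono C) e) : Epi e := by
  obtain ⟨Z, e', m, he', hm, rfl⟩ := factorizationsExist_ordEpi_ordStrongMono hC e
  have : Epi e' := he'
  have : Mono m := hm.1
  obtain ⟨s, -, hs⟩ := (he m hm e' (𝟙 A₂) (Category.comp_id _).symm).exists
  have : IsSplitEpi m := ⟨⟨⟨s, hs⟩⟩⟩
  have := isIso_of_mono_of_isSplitEpi m
  infer_instance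

end Ordinary

section Enriched

variable {V : Type u₁} [Category.{v₁} V] [MonoidalCategory V]
  {B : Type u₂} [Category.{v₂} B] [EnrichedOrdinaryCategory V B]

variable (V) in
lemma eHomEquiv_comp_eq_eHomWhiskerLeft {X Y Z : B} (f : X ⟶ Y) (g : Y ⟶ Z) :
    eHomEquiv V (f ≫ g) = eHomEquiv V f ≫ eHomWhiskerLeft V X g := by
  rw [eHomEquiv_comp, eHomWhiskerLeft, MonoidalCategory.tensorHom_def]
  simp only [Category.assoc]
  rw [unitors_inv_equal, ← rightUnitor_inv_naturality_assoc]

variable (V) in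
lemma eHomEquiv_comp_eq_eHomWhiskerRight {X Y Z : B} (f : X ⟶ Y) (g : Y ⟶ Z) :
    eHomEquiv V (f ≫ g) = eHomEquiv V g ≫ eHomWhiskerRight V f Z := by
  rw [eHomEquiv_comp, eHomWhiskerRight, tensorHom_def']
  simp only [Category.assoc]
  rw [← leftUnitor_inv_naturality_assoc]

lemma epi_of_vEpi {A₁ A₂ : B} {e : A₁ ⟶ A₂} (he : vEpi V B e) : Epi e where
  left_cancellation {W} a b hab := by
    have := he W
    apply (eHomEquiv V).injective
    rw [← cancel_mono (eHomWhiskerRight V e W), ← eHomEquiv_comp_eq_eHomWhiskerRight,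
      ← eHomEquiv_comp_eq_eHomWhiskerRight, hab]

lemma mono_of_vMono {X₁ X₂ : B} {m : X₁ ⟶ X₂} (hm : vMono V B m) : Mono m where
  right_cancellation {W} a b hab := by
    have := hm W
    apply (eHomEquiv V).injective
    rw [← cancel_mono (eHomWhiskerLeft V W m), ← eHomEquiv_comp_eq_eHomWhiskerLeft,
      ← eHomEquiv_comp_eq_eHomWhiskerLeft, hab]

/-- Evaluating the pullback property of `VOrth` at the unit object of `V`. -/
lemma ordOrth_of_vOrth {A₁ A₂ X₁ X₂ : B} {e : A₁ ⟶ A₂} {m : X₁ ⟶ X₂} (h : VOrth V B e m) :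
    OrdOrth B e m := by
  intro u v hsq
  have hw : eHomEquiv V v ≫ eHomWhiskerRight V e X₂ =
      eHomEquiv V u ≫ eHomWhiskerLeft V A₁ m := by
    rw [← eHomEquiv_comp_eq_eHomWhiskerRight, ← eHomEquiv_comp_eq_eHomWhiskerLeft, hsq]
  refine ⟨(eHomEquiv V).symm (h.lift _ _ hw), ⟨?_, ?_⟩, fun d ⟨hd₁, hd₂⟩ => ?_⟩
  · apply (eHomEquiv V).injective
    rw [eHomEquiv_comp_eq_eHomWhiskerRight, Equiv.apply_symm_apply, h.lift_snd]
  · apply (eHomEquiv V).injective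
    rw [eHomEquiv_comp_eq_eHomWhiskerLeft, Equiv.apply_symm_apply, h.lift_fst]
  · rw [Equiv.eq_symm_apply]
    apply h.hom_ext
    · rw [h.lift_fst, ← eHomEquiv_comp_eq_eHomWhiskerLeft, hd₂]
    · rw [h.lift_snd, ← eHomEquiv_comp_eq_eHomWhiskerRight, hd₁]

variable [MonoidalClosed V]

variable (V) in
lemma bijective_rightUnitor_inv_comp_uncurry {v H Y : V} (c : H ⟶ (ihom v).obj Y) [IsIso c] :
    Function.Bijective fun x : 𝟙_ V ⟶ H => (ρ_ v).inv ≫ MonoidalClosed.uncurry (x ≫ c) := by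
  refine ⟨fun x y hxy => ?_, fun z => ⟨MonoidalClosed.curry ((ρ_ v).hom ≫ z) ≫ inv c, ?_⟩⟩
  · rwa [cancel_epi, MonoidalClosed.uncurry_injective.eq_iff, cancel_mono] at hxy
  · simp only [Category.assoc, IsIso.inv_hom_id, Category.comp_id,
      MonoidalClosed.uncurry_curry, Iso.inv_hom_id_assoc]

lemma rightUnitor_inv_comp_uncurry_tensorComparison {v : V} {A T : B} (η : v ⟶ (A ⟶[V] T))
    {X : B} (g : T ⟶ X) :
    (ρ_ v).inv ≫ MonoidalClosed.uncurry (eHomEquiv V g ≫ tensorComparison V B η X) =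
      η ≫ eHomWhiskerLeft V A g := by
  rw [tensorComparison, MonoidalClosed.uncurry_eq, MonoidalCategory.whiskerLeft_comp,
    MonoidalCategory.whiskerLeft_comp, Category.assoc, Category.assoc,
    MonoidalClosed.id_tensor_pre_app_comp_ev, whisker_exchange_assoc, whisker_exchange_assoc,
    ← rightUnitor_inv_naturality_assoc, ← MonoidalClosed.uncurry_eq,
    MonoidalClosed.uncurry_curry, eHomWhiskerLeft]

lemma IsTensorUnit.bijective {v : V} {A T : B} {η : v ⟶ (A ⟶[V] T)}
    (hη : IsTensorUnit V B v A T η) (X : B) :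
    Function.Bijective fun g : T ⟶ X => η ≫ eHomWhiskerLeft V A g := by
  have := hη X
  convert (bijective_rightUnitor_inv_comp_uncurry V (tensorComparison V B η X)).comp
    (eHomEquiv V).bijective using 1
  funext g
  exact (rightUnitor_inv_comp_uncurry_tensorComparison η g).symm

lemma vMono_of_mono (ht : Tensored V B) {X₁ X₂ : B} (m : X₁ ⟶ X₂) [Mono m] : vMono V B m := by
  refine fun A => ⟨fun {v} t₁ t₂ htt => ?_⟩
  obtain ⟨T, η, hη⟩ := ht v A
  obtain ⟨g₁, rfl⟩ := (hη.bijective X₁).2 t₁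
  obtain ⟨g₂, rfl⟩ := (hη.bijective X₁).2 t₂
  simp only [Category.assoc, ← eHomWhiskerLeft_comp] at htt
  rw [(cancel_mono m).1 ((hη.bijective X₂).1 htt)]

/-- The morphism `v ⊗ e : v ⊗ A₁ ⟶ v ⊗ A₂` between tensors, characterised by its action on
hom-objects. -/
lemma IsTensorUnit.exists_tensorHom {v : V} {A₁ A₂ T₁ T₂ : B} {η₁ : v ⟶ (A₁ ⟶[V] T₁)}
    (hη₁ : IsTensorUnit V B v A₁ T₁ η₁) (η₂ : v ⟶ (A₂ ⟶[V] T₂)) (e : A₁ ⟶ A₂) :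
    ∃ te : T₁ ⟶ T₂, ∀ {X : B} (g : T₂ ⟶ X), η₁ ≫ eHomWhiskerLeft V A₁ (te ≫ g) =
      (η₂ ≫ eHomWhiskerLeft V A₂ g) ≫ eHomWhiskerRight V e X := by
  obtain ⟨te, hte⟩ := (hη₁.bijective T₂).2 (η₂ ≫ eHomWhiskerRight V e T₂)
  refine ⟨te, fun g => ?_⟩
  beta_reduce at hte
  rw [eHomWhiskerLeft_comp, ← Category.assoc, hte, Category.assoc, Category.assoc,
    ← eHom_whisker_exchange]

lemma IsTensorUnit.epi_tensorHom {v : V} {A₁ A₂ T₁ T₂ : B} {η₁ : v ⟶ (A₁ ⟶[V] T₁)}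
    {η₂ : v ⟶ (A₂ ⟶[V] T₂)} (hη₂ : IsTensorUnit V B v A₂ T₂ η₂) {e : A₁ ⟶ A₂}
    (he : vEpi V B e) {te : T₁ ⟶ T₂} (hte : ∀ {X : B} (g : T₂ ⟶ X),
      η₁ ≫ eHomWhiskerLeft V A₁ (te ≫ g) = (η₂ ≫ eHomWhiskerLeft V A₂ g) ≫ eHomWhiskerRight V e X) :
    Epi te where
  left_cancellation {W} p q hpq := by
    have := he W
    refine (hη₂.bijective W).1 ((cancel_mono (eHomWhiskerRight V e W)).1 ?_)
    rw [← hte, ← hte, hpq]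

lemma vOrth_of_strongMono (ht : Tensored V B) {A₁ A₂ X₁ X₂ : B} {e : A₁ ⟶ A₂}
    (he : vEpi V B e) (m : X₁ ⟶ X₂) [StrongMono m] : VOrth V B e m := by
  refine isPullback_of_existsUnique (eHom_whisker_exchange V e m) fun v a b hab => ?_
  obtain ⟨T₁, η₁, hη₁⟩ := ht v A₁
  obtain ⟨T₂, η₂, hη₂⟩ := ht v A₂
  obtain ⟨te, hte⟩ := hη₁.exists_tensorHom η₂ e
  have := hη₂.epi_tensorHom he hte
  obtain ⟨a, rfl⟩ := (hη₂.bijective X₂).2 a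
  obtain ⟨b, rfl⟩ := (hη₁.bijective X₁).2 b
  have sq : CommSq b te m a := ⟨(hη₁.bijective X₂).1 <| by
    beta_reduce
    rw [hte, eHomWhiskerLeft_comp, ← Category.assoc, hab]⟩
  refine ⟨η₂ ≫ eHomWhiskerLeft V A₂ sq.lift, ⟨?_, ?_⟩, fun t ⟨htm, _⟩ => ?_⟩
  · rw [Category.assoc, ← eHomWhiskerLeft_comp, sq.fac_right]
  · rw [← hte, sq.fac_left]
  · obtain ⟨t, rfl⟩ := (hη₂.bijective X₁).2 t
    have htm : t ≫ m = a := (hη₂.bijective X₂).1 <| by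
      beta_reduce
      rw [eHomWhiskerLeft_comp, ← Category.assoc, htm]
    rw [(cancel_mono m).1 (htm.trans sq.fac_right.symm)]

variable [SymmetricCategory V]

lemma rightUnitor_inv_comp_uncurry_cotensorComparison {v : V} {C X : B}
    (ε : v ⟶ (C ⟶[V] X)) {A : B} (h : A ⟶ C) :
    (ρ_ v).inv ≫ MonoidalClosed.uncurry (eHomEquiv V h ≫ cotensorComparison V B ε A) =
      ε ≫ eHomWhiskerRight V h X := by
  rw [cotensorComparison, MonoidalClosed.uncurry_eq, MonoidalCategory.whiskerLeft_comp,
    MonoidalCategory.whiskerLeft_comp, Category.assoc, Category.assoc,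
    MonoidalClosed.id_tensor_pre_app_comp_ev, whisker_exchange_assoc, whisker_exchange_assoc,
    ← rightUnitor_inv_naturality_assoc, ← MonoidalClosed.uncurry_eq,
    MonoidalClosed.uncurry_curry, eHomWhiskerRight,
    BraidedCategory.braiding_naturality_right_assoc]
  have hβ : (β_ (C ⟶[V] X) (𝟙_ V)).hom = (ρ_ _).hom ≫ (λ_ _).inv := by
    rw [← braiding_leftUnitor]; simp
  rw [hβ]; simp

lemma IsCotensorCounit.bijective {v : V} {C X : B} {ε : v ⟶ (C ⟶[V] X)}
    (hε : IsCotensorCounit V B v X C ε) (A : B) :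
    Function.Bijective fun h : A ⟶ C => ε ≫ eHomWhiskerRight V h X := by
  have := hε A
  convert (bijective_rightUnitor_inv_comp_uncurry V (cotensorComparison V B ε A)).comp
    (eHomEquiv V).bijective using 1
  funext h
  exact (rightUnitor_inv_comp_uncurry_cotensorComparison ε h).symm

lemma vEpi_of_epi (hc : Cotensored V B) {A₁ A₂ : B} (e : A₁ ⟶ A₂) [Epi e] : vEpi V B e := by
  refine fun A => ⟨fun {v} t₁ t₂ ht => ?_⟩
  obtain ⟨C, ε, hε⟩ := hc v A
  obtain ⟨h₁, rfl⟩ := (hε.bijective A₂).2 t₁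
  obtain ⟨h₂, rfl⟩ := (hε.bijective A₂).2 t₂
  simp only [Category.assoc, ← eHomWhiskerRight_comp] at ht
  rw [(cancel_epi e).1 ((hε.bijective A₁).1 ht)]

lemma vEpi_eq_ordEpi (hc : Cotensored V B) : vEpi V B = ordEpi B :=
  MorphismProperty.ext _ _ fun _ _ e => ⟨epi_of_vEpi, fun (_ : Epi e) => vEpi_of_epi hc e⟩

lemma vStrongMono_eq_ordStrongMono (ht : Tensored V B) (hc : Cotensored V B) :
    vStrongMono V B = ordStrongMono B := by
  refine MorphismProperty.ext _ _ fun _ _ m => ⟨fun ⟨hm, horth⟩ => ?_, fun hm => ?_⟩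
  · exact ⟨mono_of_vMono hm,
      fun _ _ e (_ : Epi e) => ordOrth_of_vOrth (horth e (vEpi_of_epi hc e))⟩
  · have := (ordStrongMono_iff_strongMono m).1 hm
    exact ⟨vMono_of_mono ht m, fun _ _ e he => vOrth_of_strongMono ht he m⟩

end Enriched

variable (V : Type u₁) [Category.{v₁} V] [MonoidalCategory V] [SymmetricCategory V]
  [MonoidalClosed V]
variable (B : Type u₂) [Category.{v₂} B] [EnrichedOrdinaryCategory V B]

/-- If `B` is a tensored, cotensored and finitely well-complete `V`-category, then
`(Epi_V B, StrMono_V B) = (Epi B, StrMono B)` is a `V`-factorization system. -/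
theorem stmt16 (ht : Tensored V B) (hc : Cotensored V B)
    (hfwc : OrdFinitelyWellComplete B) :
    vEpi V B = ordEpi B ∧ vStrongMono V B = ordStrongMono B ∧
      IsVFactorizationSystem V B (vEpi V B) (vStrongMono V B) := by
  have hE := vEpi_eq_ordEpi hc
  have hM := vStrongMono_eq_ordStrongMono ht hc
  refine ⟨hE, hM, ⟨?_, ?_⟩, hE ▸ hM ▸ factorizationsExist_ordEpi_ordStrongMono hfwc⟩
  · refine MorphismProperty.ext _ _ fun _ _ m => ⟨fun h => ?_, fun hm _ _ e he => hm.2 e he⟩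
    rw [hM, ordStrongMono_iff_strongMono]
    exact strongMono_of_ordRlp_ordEpi hfwc fun _ _ e he =>
      ordOrth_of_vOrth (h e (hE ▸ he))
  · refine MorphismProperty.ext _ _ fun _ _ e => ⟨fun h => ?_, fun he _ _ m hm => hm.2 e he⟩
    rw [hE]
    exact epi_of_ordLlp_ordStrongMono hfwc fun _ _ m hm => ordOrth_of_vOrth (h m (hM ▸ hm))

end EnrichedFS
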